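/- arXiv:1712.06442 — 4 statements merged into one kernel-verified Lean document; each statement's English description precedes it below -/
import Mathlib

section
/- For any graph G = (V,E), if F ⊆ V×V (viewed as a set of unordered pairs) is a minimum-cardinality set of pairs such that the graph G' = (V, E △ F) is a cograph, then every pair {x,y} ∈ F \ E has x and y in the same connected component of G. -/
/-- A cograph: a simple graph with no induced path on four vertices (`P₄`-free). -/
def IsCograph {V : Type} (G : SimpleGraph V) : Prop :=
  ¬ ∃ a b c d : V, a ≠ b ∧ a ≠ c ∧ a ≠ d ∧ b ≠ c ∧ b ≠ d ∧ c ≠ d ∧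
    G.Adj a b ∧ G.Adj b c ∧ G.Adj c d ∧ ¬ G.Adj a c ∧ ¬ G.Adj a d ∧ ¬ G.Adj b d

/-- If `F` is a minimum-cardinality set of (unordered) pairs such that
`G' = (V, E △ F)` is a cograph, then every pair `{x,y} ∈ F \\ E` joins two
vertices of the same connected component of `G`. -/
theorem cograph_editing_within_components {V : Type} (G : SimpleGraph V)
    (F : Set (Sym2 V)) (hFfin : F.Finite)
    (hcograph : IsCograph (SimpleGraph.fromEdgeSet (symmDiff G.edgeSet F)))
    (hmin : ∀ F' : Set (Sym2 V), F'.Finite →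
      IsCograph (SimpleGraph.fromEdgeSet (symmDiff G.edgeSet F')) → F.ncard ≤ F'.ncard) :
    ∀ x y : V, s(x, y) ∈ F → s(x, y) ∉ G.edgeSet → G.Reachable x y := by
  intro x y hxyF hxyE
  by_contra hreach
  set F' : Set (Sym2 V) := {e | e ∈ F ∧ ∀ u v : V, e = s(u, v) → G.Reachable u v} with hF'
  have hFsub : F' ⊆ F := fun e he => he.1
  have hmem : ∀ u v : V, s(u, v) ∈ F' ↔ s(u, v) ∈ F ∧ G.Reachable u v := by
    intro u v
    constructor
    · rintro ⟨h1, h2⟩; exact ⟨h1, h2 u v rfl⟩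
    · rintro ⟨h1, h2⟩
      refine ⟨h1, ?_⟩
      intro a b hab
      rcases Sym2.eq_iff.mp hab with ⟨rfl, rfl⟩ | ⟨rfl, rfl⟩
      · exact h2
      · exact h2.symm
  have hEdge : ∀ u v : V, s(u, v) ∈ symmDiff G.edgeSet F' ↔
      s(u, v) ∈ symmDiff G.edgeSet F ∧ G.Reachable u v := by
    intro u v
    rw [Set.mem_symmDiff, Set.mem_symmDiff]
    constructor
    · rintro (⟨hE, hF⟩ | ⟨hFm, hE⟩)
      · have hR : G.Reachable u v := (G.mem_edgeSet.mp hE).reachable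
        exact ⟨Or.inl ⟨hE, fun h => hF ((hmem u v).mpr ⟨h, hR⟩)⟩, hR⟩
      · obtain ⟨hFm, hR⟩ := (hmem u v).mp hFm
        exact ⟨Or.inr ⟨hFm, hE⟩, hR⟩
    · rintro ⟨hE | hF, hR⟩
      · exact Or.inl ⟨hE.1, fun h => hE.2 ((hmem u v).mp h).1⟩
      · exact Or.inr ⟨(hmem u v).mpr ⟨hF.1, hR⟩, hF.2⟩
  have adj' : ∀ u v : V, (SimpleGraph.fromEdgeSet (symmDiff G.edgeSet F')).Adj u v ↔
      (SimpleGraph.fromEdgeSet (symmDiff G.edgeSet F)).Adj u v ∧ G.Reachable u v := by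
    intro u v
    simp only [SimpleGraph.fromEdgeSet_adj, hEdge]
    tauto
  have hcog' : IsCograph (SimpleGraph.fromEdgeSet (symmDiff G.edgeSet F')) := by
    intro h
    obtain ⟨a, b, c, d, hab, hac, had, hbc, hbd, hcd, Aab, Abc, Acd, Nac, Nad, Nbd⟩ := h
    have Rab := (adj' a b).mp Aab
    have Rbc := (adj' b c).mp Abc
    have Rcd := (adj' c d).mp Acd
    exact hcograph ⟨a, b, c, d, hab, hac, had, hbc, hbd, hcd, Rab.1, Rbc.1, Rcd.1,
      fun h => Nac ((adj' a c).mpr ⟨h, Rab.2.trans Rbc.2⟩),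
      fun h => Nad ((adj' a d).mpr ⟨h, Rab.2.trans (Rbc.2.trans Rcd.2)⟩),
      fun h => Nbd ((adj' b d).mpr ⟨h, Rbc.2.trans Rcd.2⟩)⟩
  have hss : F' ⊂ F := ⟨hFsub, fun h => hreach (((hmem x y).mp (h hxyF)).2)⟩
  have hlt : F'.ncard < F.ncard := Set.ncard_lt_ncard hss hFfin
  exact absurd (hmin F' (hFfin.subset hFsub) hcog') (not_le.mpr hlt)
end

section
/- Let R be a dense set of rooted triples on leaf set L (for each 3-element subset of L there is at least one triple in R on those leaves). Then for every subset S ⊆ L, if R is consistent, the Aho graph [R, S] has at most two connected components. -/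
namespace Phylo

/-- Rooted trees with leaves labeled by `L`. -/
inductive T (L : Type) where
  | leaf (x : L) : T L
  | node (ts : List (T L)) : T L

/-- `Subtree s t`: `s` is the subtree of `t` rooted at some vertex of `t`. -/
inductive Subtree {L : Type} : T L → T L → Prop where
  | refl (t : T L) : Subtree t t
  | child {s u : T L} {ts : List (T L)} : s ∈ ts → Subtree u s → Subtree u (T.node ts)

/-- The list of leaf labels of a tree. -/
def leafList {L : Type} : T L → List L
  | T.leaf x => [x]
  | T.node ts => (ts.attach.map (fun s => leafList s.1)).flatten
decreasing_by all_goals (simp_wf; have := List.sizeOf_lt_of_mem s.2; omega)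

/-- A phylogenetic tree: every inner vertex has at least two children. -/
inductive IsPhylo {L : Type} : T L → Prop where
  | leaf (x : L) : IsPhylo (T.leaf x)
  | node {ts : List (T L)} : 2 ≤ ts.length → (∀ t ∈ ts, IsPhylo t) → IsPhylo (T.node ts)

/-- A phylogenetic tree with pairwise distinct leaf labels. -/
def PhyloTree {L : Type} (t : T L) : Prop := IsPhylo t ∧ (leafList t).Nodup

/-- A binary tree: every inner vertex has exactly two children. -/
inductive BinaryT {L : Type} : T L → Prop where
  | leaf (x : L) : BinaryT (T.leaf x)
  | node {ts : List (T L)} : ts.length = 2 → (∀ t ∈ ts, BinaryT t) → BinaryT (T.node ts)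

def numVertices {L : Type} : T L → ℕ
  | T.leaf _ => 1
  | T.node ts => 1 + (ts.attach.map (fun s => numVertices s.1)).sum
decreasing_by all_goals (simp_wf; have := List.sizeOf_lt_of_mem s.2; omega)

def numLeaves {L : Type} : T L → ℕ
  | T.leaf _ => 1
  | T.node ts => (ts.attach.map (fun s => numLeaves s.1)).sum
decreasing_by all_goals (simp_wf; have := List.sizeOf_lt_of_mem s.2; omega)

def numInner {L : Type} : T L → ℕ
  | T.leaf _ => 0
  | T.node ts => 1 + (ts.attach.map (fun s => numInner s.1)).sum
decreasing_by all_goals (simp_wf; have := List.sizeOf_lt_of_mem s.2; omega)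

/-- `C` is a cluster of `t`: the set of leaves below some vertex of `t`. -/
def IsCluster {L : Type} (t : T L) (C : Set L) : Prop :=
  ∃ s, Subtree s t ∧ ∀ x, x ∈ leafList s ↔ x ∈ C

def clusterSet {L : Type} (t : T L) : Set (Set L) := {C | IsCluster t C}

/-- The tree `t` displays the rooted triple `(ab|c)`. -/
def Displays {L : Type} (t : T L) (a b c : L) : Prop :=
  a ≠ b ∧ a ≠ c ∧ b ≠ c ∧ a ∈ leafList t ∧ b ∈ leafList t ∧ c ∈ leafList t ∧
    ∃ s, Subtree s t ∧ a ∈ leafList s ∧ b ∈ leafList s ∧ c ∉ leafList s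

/-- A rooted triple `(ab|c)`. -/
structure Trip (L : Type) where
  a : L
  b : L
  c : L

def Trip.proper {L : Type} (r : Trip L) : Prop := r.a ≠ r.b ∧ r.a ≠ r.c ∧ r.b ≠ r.c

def DisplaysT {L : Type} (t : T L) (r : Trip L) : Prop := Displays t r.a r.b r.c

def DisplaysAll {L : Type} (t : T L) (R : Set (Trip L)) : Prop := ∀ r ∈ R, DisplaysT t r

def tripLeaves {L : Type} (r : Trip L) : Set L := {r.a, r.b, r.c}

/-- The leaf set `L_R` of a triple set. -/
def leafSetR {L : Type} (R : Set (Trip L)) : Set L := ⋃ r ∈ R, tripLeaves r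

/-- `t` is a phylogenetic tree on the leaf set `L_R` displaying all triples of `R`. -/
def IsTreeFor {L : Type} (t : T L) (R : Set (Trip L)) : Prop :=
  PhyloTree t ∧ (∀ x, x ∈ leafList t ↔ x ∈ leafSetR R) ∧ DisplaysAll t R

/-- `R` is consistent: some phylogenetic tree on `L_R` displays all triples of `R`. -/
def Consistent {L : Type} (R : Set (Trip L)) : Prop := ∃ t, IsTreeFor t R

/-- `R` is consistent relative to the leaf set `S`. -/
def ConsistentOn {L : Type} (R : Set (Trip L)) (S : Set L) : Prop :=
  ∃ t : T L, PhyloTree t ∧ (∀ x, x ∈ leafList t ↔ x ∈ S) ∧ DisplaysAll t R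

/-- The closure of `R`: all triples displayed by every phylogenetic tree on `L_R`
displaying `R`. -/
def cl {L : Type} (R : Set (Trip L)) : Set (Trip L) :=
  {r | ∀ t : T L, IsTreeFor t R → DisplaysT t r}

/-- Membership of the (unordered) rooted triple `(xy|z)` in `R`. -/
def MemS {L : Type} (R : Set (Trip L)) (x y z : L) : Prop :=
  Trip.mk x y z ∈ R ∨ Trip.mk y x z ∈ R

/-- All triples of `R` have pairwise distinct leaves taken from `S`. -/
def ProperOn {L : Type} (R : Set (Trip L)) (S : Set L) : Prop :=
  ∀ r ∈ R, r.a ∈ S ∧ r.b ∈ S ∧ r.c ∈ S ∧ r.proper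

/-- `R` is dense on `S`: each 3-element subset of `S` carries at least one triple of `R`. -/
def DenseOn {L : Type} (R : Set (Trip L)) (S : Set L) : Prop :=
  ProperOn R S ∧ ∀ x y z : L, x ∈ S → y ∈ S → z ∈ S → x ≠ y → x ≠ z → y ≠ z →
    (MemS R x y z ∨ MemS R x z y ∨ MemS R y z x)

/-- `R` is strictly dense on `S`: each 3-element subset of `S` carries exactly one
of the three possible rooted triples. -/
def StrictlyDense {L : Type} (R : Set (Trip L)) (S : Set L) : Prop :=
  ProperOn R S ∧ ∀ x y z : L, x ∈ S → y ∈ S → z ∈ S → x ≠ y → x ≠ z → y ≠ z →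
    ((MemS R x y z ∧ ¬ MemS R x z y ∧ ¬ MemS R y z x) ∨
     (¬ MemS R x y z ∧ MemS R x z y ∧ ¬ MemS R y z x) ∨
     (¬ MemS R x y z ∧ ¬ MemS R x z y ∧ MemS R y z x))

/-- The Aho graph `[R, S]`: vertices `S`, edges `{x,y}` for triples `(xy|z) ∈ R`
with `x,y,z ∈ S`. -/
def ahoGraph {L : Type} (R : Set (Trip L)) (S : Set L) : SimpleGraph S where
  Adj x y := x ≠ y ∧ ∃ r ∈ R, (r.c ∈ S) ∧
      ((r.a = (x : L) ∧ r.b = (y : L)) ∨ (r.a = (y : L) ∧ r.b = (x : L)))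
  symm := by
    constructor
    rintro x y ⟨hxy, r, hr, hc, h⟩
    exact ⟨hxy.symm, r, hr, hc, h.symm⟩
  loopless := by constructor; rintro x ⟨h, -⟩; exact h rfl


end Phylo

open Phylo in
/-- If `R` is a dense set of rooted triples on `L`, then for every `S ⊆ L`,
if `R` is consistent, the Aho graph `[R, S]` has at most two connected components. -/
theorem aho_dense_at_most_two_components {L : Type} (R : Set (Trip L)) (S : Set L)
    (hdense : DenseOn R S) (hcons : Consistent R) :
    ∀ S' : Set L, S' ⊆ S →
      ∀ c₁ c₂ c₃ : (ahoGraph R S').ConnectedComponent, c₁ = c₂ ∨ c₁ = c₃ ∨ c₂ = c₃ := by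
  intro S' hS' c₁ c₂ c₃
  obtain ⟨x, rfl⟩ := c₁.exists_rep
  obtain ⟨y, rfl⟩ := c₂.exists_rep
  obtain ⟨z, rfl⟩ := c₃.exists_rep
  have key : ∀ a b c : S', (a : L) ≠ (b : L) → MemS R a b c →
      (ahoGraph R S').connectedComponentMk a = (ahoGraph R S').connectedComponentMk b := by
    rintro a b c hab (h | h)
    · exact SimpleGraph.ConnectedComponent.sound
        (SimpleGraph.Adj.reachable ⟨fun h' => hab (congrArg Subtype.val h'),
          ⟨a, b, c⟩, h, c.2, Or.inl ⟨rfl, rfl⟩⟩)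
    · exact SimpleGraph.ConnectedComponent.sound
        (SimpleGraph.Adj.reachable ⟨fun h' => hab (congrArg Subtype.val h'),
          ⟨b, a, c⟩, h, c.2, Or.inr ⟨rfl, rfl⟩⟩)
  by_cases hxy : (x : L) = (y : L)
  · exact Or.inl (congrArg (ahoGraph R S').connectedComponentMk (Subtype.coe_injective hxy))
  by_cases hxz : (x : L) = (z : L)
  · exact Or.inr (Or.inl (congrArg (ahoGraph R S').connectedComponentMk (Subtype.coe_injective hxz)))
  by_cases hyz : (y : L) = (z : L)
  · exact Or.inr (Or.inr (congrArg (ahoGraph R S').connectedComponentMk (Subtype.coe_injective hyz)))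
  rcases hdense.2 x y z (hS' x.2) (hS' y.2) (hS' z.2) hxy hxz hyz with h | h | h
  · exact Or.inl (key x y z hxy h)
  · exact Or.inr (Or.inl (key x z y hxz h))
  · exact Or.inr (Or.inr (key y z x hyz h))
end

section
/- If (ab|c) and (cd|b) are both displayed by a rooted phylogenetic tree T (with a,b,c,d pairwise distinct leaves), then both (ab|d) and (cd|a) are displayed by T. -/
namespace Phylo

theorem leafList_node {L : Type} (ts : List (T L)) :
    leafList (T.node ts) = (ts.map leafList).flatten := by
  rw [leafList]
  congr 1
  simp [List.attach_map_val]

theorem nodup_child {L : Type} {ts : List (T L)} {s : T L}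
    (h : (leafList (T.node ts)).Nodup) (hs : s ∈ ts) : (leafList s).Nodup := by
  rw [leafList_node] at h
  exact (List.nodup_flatten.mp h).1 _ (List.mem_map_of_mem hs)

theorem mem_child_unique {L : Type} {ts : List (T L)} {u1 u2 : T L} {x : L}
    (h : ((ts.map leafList).flatten).Nodup) (h1 : u1 ∈ ts) (h2 : u2 ∈ ts)
    (hx1 : x ∈ leafList u1) (hx2 : x ∈ leafList u2) : u1 = u2 := by
  induction ts with
  | nil => cases h1
  | cons hd tl ih =>
    simp only [List.map_cons, List.flatten_cons] at h
    have hnd := List.nodup_append'.mp h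
    have hdisj : List.Disjoint (leafList hd) ((List.map leafList tl).flatten) :=
      List.disjoint_of_nodup_append h
    have hmem : ∀ u ∈ tl, ∀ y ∈ leafList u, y ∈ (List.map leafList tl).flatten :=
      fun u hu y hy => List.mem_flatten.mpr ⟨_, List.mem_map_of_mem hu, hy⟩
    rcases List.mem_cons.mp h1 with h1 | h1
    · rcases List.mem_cons.mp h2 with h2 | h2
      · rw [h1, h2]
      · exact absurd (hmem u2 h2 x hx2) (hdisj (h1 ▸ hx1))
    · rcases List.mem_cons.mp h2 with h2 | h2
      · exact absurd (hmem u1 h1 x hx1) (hdisj (h2 ▸ hx2))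
      · exact ih hnd.2.1 h1 h2

theorem subtree_leaf_subset {L : Type} {s t : T L} (h : Subtree s t) :
    ∀ x, x ∈ leafList s → x ∈ leafList t := by
  induction h with
  | refl => exact fun x hx => hx
  | child hmem _ ih =>
    intro x hx
    rw [leafList_node]
    exact List.mem_flatten.mpr ⟨_, List.mem_map_of_mem ‹_›, ih x hx⟩

theorem T.ind {L : Type} {motive : T L → Prop} (hleaf : ∀ x, motive (T.leaf x))
    (hnode : ∀ ts, (∀ s ∈ ts, motive s) → motive (T.node ts)) : ∀ t, motive t
  | .leaf x => hleaf x
  | .node ts => hnode ts (fun s hs => T.ind hleaf hnode s)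
decreasing_by (have := List.sizeOf_lt_of_mem hs; simp; omega)

theorem subtree_trichotomy {L : Type} {t s1 s2 : T L}
    (hnd : (leafList t).Nodup) (h1 : Subtree s1 t) (h2 : Subtree s2 t) :
    (∀ x, x ∈ leafList s1 → x ∈ leafList s2) ∨
    (∀ x, x ∈ leafList s2 → x ∈ leafList s1) ∨
    (∀ x, x ∈ leafList s1 → x ∉ leafList s2) := by
  induction t using Phylo.T.ind with
  | hleaf x =>
    cases h1; cases h2; exact Or.inl fun x hx => hx
  | hnode ts ih =>
    cases h1 with
    | refl => exact Or.inr (Or.inl (subtree_leaf_subset h2))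
    | child hm1 hs1 =>
      rename_i u1
      cases h2 with
      | refl => exact Or.inl (subtree_leaf_subset (Subtree.child hm1 hs1))
      | child hm2 hs2 =>
        rename_i u2
        by_cases hint : ∃ x, x ∈ leafList s1 ∧ x ∈ leafList s2
        · obtain ⟨x, hx1, hx2⟩ := hint
          have hx1' := subtree_leaf_subset hs1 x hx1
          have hx2' := subtree_leaf_subset hs2 x hx2
          have : u1 = u2 := by
            rw [leafList_node] at hnd
            exact mem_child_unique hnd hm1 hm2 hx1' hx2'
          subst this
          rcases ih u1 hm1 (nodup_child hnd hm1) hs1 hs2 with h | h | h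
          · exact Or.inl h
          · exact Or.inr (Or.inl h)
          · exact Or.inr (Or.inr h)
        · push_neg at hint
          exact Or.inr (Or.inr hint)


end Phylo

open Phylo in
/-- Inference rule (iii): if `(ab|c)` and `(cd|b)` are displayed by a rooted
phylogenetic tree `T`, then `(ab|d)` and `(cd|a)` are displayed by `T`. -/
theorem displays_rule_iii {L : Type} (t : T L) (ht : PhyloTree t) (a b c d : L)
    (hab : a ≠ b) (hac : a ≠ c) (had : a ≠ d) (hbc : b ≠ c) (hbd : b ≠ d) (hcd : c ≠ d)
    (h₁ : Displays t a b c) (h₂ : Displays t c d b) :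
    Displays t a b d ∧ Displays t c d a := by
  obtain ⟨-, -, -, hat, hbt, hct, s1, hs1, ha1, hb1, hc1⟩ := h₁
  obtain ⟨-, -, -, -, hdt, -, s2, hs2, hc2, hd2, hb2⟩ := h₂
  rcases subtree_trichotomy ht.2 hs1 hs2 with h | h | h
  · exact absurd (h b hb1) hb2
  · exact absurd (h c hc2) hc1
  · exact ⟨⟨hab, had, hbd, hat, hbt, hdt, s1, hs1, ha1, hb1, fun hd1 => h d hd1 hd2⟩,
      ⟨hcd, hac.symm, had.symm, hct, hdt, hat, s2, hs2, hc2, hd2, fun ha2 => h a ha1 ha2⟩⟩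
end

section
/- If R is a consistent strictly dense set of rooted triples, then R is closed, i.e., cl(R) = R. -/
namespace Phylo

section Aux
variable {L : Type}

lemma mem_leafList_node {ts : List (T L)} {s : T L} {x : L}
    (hs : s ∈ ts) (hx : x ∈ leafList s) : x ∈ leafList (T.node ts) := by
  have heq : leafList (T.node ts) = (ts.attach.map fun s => leafList s.1).flatten := by
    simp [leafList]
  rw [heq]
  exact List.mem_flatten.2 ⟨leafList s, List.mem_map.2 ⟨⟨s, hs⟩, List.mem_attach _ _, rfl⟩, hx⟩

lemma subtree_subset {s t : T L} (h : Subtree s t) :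
    ∀ x ∈ leafList s, x ∈ leafList t := by
  induction h with
  | refl => exact fun x hx => hx
  | child hmem _ ih => exact fun x hx => mem_leafList_node hmem (ih x hx)

lemma nodup_node {ts : List (T L)} (h : (leafList (T.node ts)).Nodup) :
    (∀ s ∈ ts, (leafList s).Nodup) ∧
      (∀ s₁ ∈ ts, ∀ s₂ ∈ ts, s₁ ≠ s₂ → ∀ x ∈ leafList s₁, x ∉ leafList s₂) := by
  rw [show leafList (T.node ts) = (ts.attach.map (fun s => leafList s.1)).flatten from by
    simp [leafList]] at h
  rw [List.nodup_flatten] at h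
  obtain ⟨h1, h2⟩ := h
  constructor
  · intro s hs
    exact h1 _ (List.mem_map.2 ⟨⟨s, hs⟩, List.mem_attach _ _, rfl⟩)
  · rw [List.pairwise_map] at h2
    intro s₁ h₁ s₂ hh₂ hne x hx
    have hsym : Symmetric fun a b : {x // x ∈ ts} => List.Disjoint (leafList a.1) (leafList b.1) :=
      fun a b hab => List.Disjoint.symm hab
    haveI : Std.Symm (fun a b : {x // x ∈ ts} => List.Disjoint (leafList a.1) (leafList b.1)) :=
      ⟨fun a b hab => hsym hab⟩
    have := h2.forall (List.mem_attach ts ⟨s₁, h₁⟩) (List.mem_attach ts ⟨s₂, hh₂⟩)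
      (by simp [hne])
    exact fun hx2 => this hx hx2

theorem subtree_trich : ∀ (t : T L), (leafList t).Nodup → ∀ s u, Subtree s t → Subtree u t →
    ((∀ x ∈ leafList s, x ∈ leafList u) ∨ (∀ x ∈ leafList u, x ∈ leafList s) ∨
      (∀ x ∈ leafList s, x ∉ leafList u))
  | T.leaf y => by
    intro _ s u h1 h2
    have hs : s = T.leaf y := by cases h1 with | refl => rfl
    have hu : u = T.leaf y := by cases h2 with | refl => rfl
    subst hs; subst hu; exact Or.inl (fun x hx => hx)
  | T.node ts => by
    intro hnd s u h1 h2
    cases h1 with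
    | refl => exact Or.inr (Or.inl (subtree_subset h2))
    | @child c₁ _ _ hc₁ h1' =>
      cases h2 with
      | refl => exact Or.inl (subtree_subset (Subtree.child hc₁ h1'))
      | @child c₂ _ _ hc₂ h2' =>
        obtain ⟨hnods, hdisj⟩ := nodup_node hnd
        by_cases hcc : c₁ = c₂
        · subst hcc
          exact subtree_trich c₁ (hnods _ hc₁) s u h1' h2'
        · exact Or.inr (Or.inr (fun x hx hx2 =>
            hdisj c₁ hc₁ c₂ hc₂ hcc x (subtree_subset h1' x hx) (subtree_subset h2' x hx2)))
decreasing_by all_goals (simp_wf; subst_vars; have := List.sizeOf_lt_of_mem hc₁; omega)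

/-- A tree with distinct leaf labels cannot have two "conflicting" subtrees. -/
lemma no_conflict {t : T L} (hnd : (leafList t).Nodup) {s₁ s₂ : T L}
    (h1 : Subtree s₁ t) (h2 : Subtree s₂ t)
    {w p q : L} (hw1 : w ∈ leafList s₁) (hw2 : w ∈ leafList s₂)
    (hp1 : p ∈ leafList s₁) (hp2 : p ∉ leafList s₂)
    (hq2 : q ∈ leafList s₂) (hq1 : q ∉ leafList s₁) : False := by
  rcases subtree_trich t hnd s₁ s₂ h1 h2 with h | h | h
  · exact hp2 (h p hp1)
  · exact hq1 (h q hq2)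
  · exact h w hw1 hw2

end Aux

end Phylo

open Phylo in
/-- If `R` is a consistent strictly dense set of rooted triples, then `R` is
closed, i.e. `cl(R) = R` (up to the identification `(xy|z) = (yx|z)`). -/
theorem strictly_dense_consistent_closed {L : Type} (S : Set L)
    (hfin : S.Finite) (hcard : 3 ≤ S.ncard)
    (R : Set (Trip L)) (hsd : StrictlyDense R S) (hcons : ConsistentOn R S) :
    ∀ r : Trip L, r ∈ cl R ↔ MemS R r.a r.b r.c := by
  -- the leaf set of R is S
  have hprop := hsd.1
  have hLS : ∀ x, x ∈ leafSetR R ↔ x ∈ S := by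
    intro x
    constructor
    · intro hx
      obtain ⟨r, hr, hx⟩ := Set.mem_iUnion₂.1 hx
      obtain ⟨ha, hb, hc, _⟩ := hprop r hr
      rcases hx with h | h | h <;> simp_all [tripLeaves]
    · intro hx
      have h2 : 2 ≤ (S \ {x}).ncard := by
        rw [Set.ncard_diff_singleton_of_mem hx]; omega
      obtain ⟨y, z, hy, hz, hyz⟩ := (Set.one_lt_ncard_iff (hfin.diff (t := {x}))).1 h2
      have hyS : y ∈ S := hy.1
      have hzS : z ∈ S := hz.1
      have hxy : x ≠ y := fun h => hy.2 (by simp [h.symm])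
      have hxz : x ≠ z := fun h => hz.2 (by simp [h.symm])
      have memtrip : ∀ a b c : L, MemS R a b c →
          (a ∈ leafSetR R ∧ b ∈ leafSetR R ∧ c ∈ leafSetR R) := by
        rintro a b c (h | h)
        · exact ⟨Set.mem_iUnion₂.2 ⟨_, h, Or.inl rfl⟩,
            Set.mem_iUnion₂.2 ⟨_, h, Or.inr (Or.inl rfl)⟩,
            Set.mem_iUnion₂.2 ⟨_, h, Or.inr (Or.inr rfl)⟩⟩
        · exact ⟨Set.mem_iUnion₂.2 ⟨_, h, Or.inr (Or.inl rfl)⟩,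
            Set.mem_iUnion₂.2 ⟨_, h, Or.inl rfl⟩,
            Set.mem_iUnion₂.2 ⟨_, h, Or.inr (Or.inr rfl)⟩⟩
      rcases hsd.2 x y z hx hyS hzS hxy hxz hyz with ⟨h, _, _⟩ | ⟨_, h, _⟩ | ⟨_, _, h⟩
      · exact (memtrip _ _ _ h).1
      · exact (memtrip _ _ _ h).1
      · exact (memtrip _ _ _ h).2.2
  -- the consistent tree is a tree for R
  obtain ⟨t, hpt, hleaf, hdall⟩ := hcons
  have hT : IsTreeFor t R := ⟨hpt, fun x => (hleaf x).trans (hLS x).symm, hdall⟩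
  have hnd := hpt.2
  -- a displayed triple yields a conflicting-subtree witness
  have disp_sub : ∀ x y z : L, Displays t x y z →
      ∃ s, Subtree s t ∧ x ∈ leafList s ∧ y ∈ leafList s ∧ z ∉ leafList s :=
    fun x y z h => h.2.2.2.2.2.2
  have memS_disp : ∀ x y z : L, MemS R x y z →
      ∃ s, Subtree s t ∧ x ∈ leafList s ∧ y ∈ leafList s ∧ z ∉ leafList s := by
    rintro x y z (h | h)
    · exact disp_sub x y z (hdall _ h)
    · obtain ⟨s, hs, h1, h2, h3⟩ := disp_sub y x z (hdall _ h)
      exact ⟨s, hs, h2, h1, h3⟩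
  intro r
  constructor
  · intro hr
    have hd : Displays t r.a r.b r.c := hr t hT
    obtain ⟨hab, hac, hbc, ha, hb, hc, s, hs, has, hbs, hcs⟩ := hd
    have haS : r.a ∈ S := (hleaf _).1 ha
    have hbS : r.b ∈ S := (hleaf _).1 hb
    have hcS : r.c ∈ S := (hleaf _).1 hc
    rcases hsd.2 r.a r.b r.c haS hbS hcS hab hac hbc with ⟨h, _, _⟩ | ⟨_, h, _⟩ | ⟨_, _, h⟩
    · exact h
    · -- (ac|b) ∈ R conflicts with displayed (ab|c)
      exfalso
      obtain ⟨s', hs', has', hcs', hbs'⟩ := memS_disp r.a r.c r.b h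
      exact no_conflict hnd hs hs' has has' hbs hbs' hcs' hcs
    · -- (bc|a) ∈ R conflicts with displayed (ab|c)
      exfalso
      obtain ⟨s', hs', hbs', hcs', has'⟩ := memS_disp r.b r.c r.a h
      exact no_conflict hnd hs hs' hbs hbs' has has' hcs' hcs
  · rintro (h | h) t' ht'
    · exact ht'.2.2 _ h
    · obtain ⟨h1, h2, h3, h4, h5, h6, s, hs, hh⟩ := ht'.2.2 _ h
      exact ⟨h1.symm, h3, h2, h5, h4, h6, s, hs, hh.2.1, hh.1, hh.2.2⟩
end
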